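/- Every comodule over a coalgebra C over a field k is the directed union (filtered colimit) of its finite-dimensional subcomodules; consequently, the category of C-comodules is the ind-completion of the category of finite-dimensional C-comodules. -/

import Mathlib

/-!
For `v ∈ V` let `W` be spanned by `v` and the slices `(id ⊗ f) (ρ v)`, `f ∈ C*`. Expanding `ρ v`
in a basis of `C` shows `ρ v ∈ W ⊗ C`, and `W` is finite-dimensional because `ρ v` already lies in
`W' ⊗ C` for some finite-dimensional `W'`, which must then contain every slice. Coassociativity
gives `ρ ((id ⊗ f) (ρ v)) = (id ⊗ (id ⊗ f) ∘ Δ) (ρ v) ∈ W ⊗ C`, so `W` is a subcomodule.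
Directedness holds because a sum of subcomodules is a subcomodule.
-/

open TensorProduct LinearMap

namespace TensorProduct

variable {R M N P : Type*} [CommRing R] [AddCommGroup M] [Module R M] [AddCommGroup N]
  [Module R N] [AddCommGroup P] [Module R P]

noncomputable def rightSlice (f : Module.Dual R N) : M ⊗[R] N →ₗ[R] M :=
  TensorProduct.rid R M ∘ₗ lTensor M f

@[simp]
lemma rightSlice_tmul (f : Module.Dual R N) (m : M) (n : N) :
    rightSlice f (m ⊗ₜ[R] n) = f n • m := by
  simp [rightSlice]

lemma rightSlice_rTensor (f : Module.Dual R N) (g : M →ₗ[R] P) (x : M ⊗[R] N) :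
    rightSlice f (rTensor N g x) = g (rightSlice f x) := by
  induction x using TensorProduct.induction_on <;> simp_all

lemma rightSlice_assoc (f : Module.Dual R N) (y : (M ⊗[R] N) ⊗[R] N) :
    rightSlice f y = lTensor M (rightSlice f) (TensorProduct.assoc R M N N y) := by
  induction y using TensorProduct.induction_on with
  | zero => simp
  | tmul x n =>
    induction x using TensorProduct.induction_on <;> simp_all [add_tmul, tmul_smul]
  | add y y' hy hy' => simp_all

/-- The smallest submodule `M'` of `M` with `x ∈ M' ⊗ N` (when `N` is free). -/
def leftSupport (x : M ⊗[R] N) : Submodule R M :=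
  Submodule.span R (Set.range fun f : Module.Dual R N => rightSlice f x)

lemma lTensor_mem_range_rTensor {W : Submodule R M} {x : M ⊗[R] N}
    (hx : x ∈ range (rTensor N W.subtype)) (g : N →ₗ[R] P) :
    lTensor M g x ∈ range (rTensor P W.subtype) := by
  obtain ⟨y, rfl⟩ := hx
  refine ⟨lTensor W g y, ?_⟩
  rw [← LinearMap.comp_apply, ← LinearMap.comp_apply, rTensor_comp_lTensor, lTensor_comp_rTensor]

lemma range_rTensor_mono {W W' : Submodule R M} (h : W ≤ W') :
    range (rTensor N W.subtype) ≤ range (rTensor N W'.subtype) := by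
  rw [← Submodule.subtype_comp_inclusion W W' h, rTensor_comp]
  exact LinearMap.range_comp_le_range _ _

lemma mem_range_rTensor_iff_rightSlice_mem [Module.Free R N] {W : Submodule R M}
    {x : M ⊗[R] N} :
    x ∈ range (rTensor N W.subtype) ↔ ∀ f : Module.Dual R N, rightSlice f x ∈ W := by
  classical
  constructor
  · rintro ⟨y, rfl⟩ f
    rw [rightSlice_rTensor]
    exact Subtype.coe_prop _
  · intro h
    let 𝒞 := Module.Free.chooseBasis R N
    have hx := (equivFinsuppOfBasisRight 𝒞).symm_apply_apply x
    rw [equivFinsuppOfBasisRight_symm_apply] at hx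
    have hcoeff (i) : equivFinsuppOfBasisRight 𝒞 x i ∈ W := by
      rw [equivFinsuppOfBasisRight_apply]
      exact h _
    rw [← hx]
    exact Submodule.finsuppSum_mem _ _ _ _ fun i _ => ⟨⟨_, hcoeff i⟩ ⊗ₜ 𝒞 i, rfl⟩

lemma leftSupport_le [Module.Free R N] {W : Submodule R M} {x : M ⊗[R] N}
    (hx : x ∈ range (rTensor N W.subtype)) : leftSupport x ≤ W :=
  Submodule.span_le.mpr <| Set.range_subset_iff.mpr (mem_range_rTensor_iff_rightSlice_mem.mp hx)

lemma mem_range_rTensor_leftSupport [Module.Free R N] (x : M ⊗[R] N) :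
    x ∈ range (rTensor N (leftSupport x).subtype) :=
  mem_range_rTensor_iff_rightSlice_mem.mpr fun f => Submodule.subset_span ⟨f, rfl⟩

lemma leftSupport_fg [IsNoetherianRing R] [Module.Free R N] (x : M ⊗[R] N) :
    (leftSupport x).FG := by
  obtain ⟨W, hW, hx⟩ := exists_finite_submodule_left_of_setFinite {x} (Set.finite_singleton x)
  exact ((Module.Finite.iff_fg).mp hW).of_le (leftSupport_le (hx rfl))

end TensorProduct

section Comodule

variable {R C V : Type*} [CommRing R] [AddCommGroup C] [Module R C] [AddCommGroup V] [Module R V]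

def IsSubcomodule (ρ : V →ₗ[R] V ⊗[R] C) (W : Submodule R V) : Prop :=
  W ≤ (range (rTensor C W.subtype)).comap ρ

lemma IsSubcomodule.sup {ρ : V →ₗ[R] V ⊗[R] C} {W W' : Submodule R V}
    (hW : IsSubcomodule ρ W) (hW' : IsSubcomodule ρ W') : IsSubcomodule ρ (W ⊔ W') :=
  sup_le (hW.trans (Submodule.comap_mono (range_rTensor_mono le_sup_left)))
    (hW'.trans (Submodule.comap_mono (range_rTensor_mono le_sup_right)))

variable [Coalgebra R C] [Module.Free R C] (ρ : V →ₗ[R] V ⊗[R] C)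
  (hcoassoc : ∀ v : V, (TensorProduct.assoc R V C C) (rTensor C ρ (ρ v))
    = lTensor V (Coalgebra.comul (R := R)) (ρ v))
include hcoassoc

lemma apply_rightSlice_mem_range_rTensor_leftSupport (v : V) (f : Module.Dual R C) :
    ρ (rightSlice f (ρ v)) ∈ range (rTensor C (leftSupport (ρ v)).subtype) := by
  have h : ρ (rightSlice f (ρ v)) = lTensor V (rightSlice f ∘ₗ Coalgebra.comul) (ρ v) := by
    rw [← rightSlice_rTensor, rightSlice_assoc, hcoassoc, lTensor_comp, LinearMap.comp_apply]
  rw [h]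
  exact lTensor_mem_range_rTensor (mem_range_rTensor_leftSupport _) _

lemma isSubcomodule_span_singleton_sup_leftSupport (v : V) :
    IsSubcomodule ρ ((R ∙ v) ⊔ leftSupport (ρ v)) := by
  have hmono := range_rTensor_mono (N := C) (le_sup_right (a := R ∙ v) (b := leftSupport (ρ v)))
  refine sup_le ((Submodule.span_singleton_le_iff_mem _ _).mpr ?_) ?_
  · exact hmono (mem_range_rTensor_leftSupport _)
  · refine Submodule.span_le.mpr (Set.range_subset_iff.mpr fun f => ?_)
    exact hmono (apply_rightSlice_mem_range_rTensor_leftSupport ρ hcoassoc v f)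

lemma exists_fg_isSubcomodule_mem [IsNoetherianRing R] (v : V) :
    ∃ W : Submodule R V, W.FG ∧ IsSubcomodule ρ W ∧ v ∈ W :=
  ⟨_, (Submodule.fg_span_singleton v).sup (leftSupport_fg _),
    isSubcomodule_span_singleton_sup_leftSupport ρ hcoassoc v,
    Submodule.mem_sup_left (Submodule.mem_span_singleton_self v)⟩

end Comodule

theorem stmt11_general (k : Type) [Field k] (C : Type) [AddCommGroup C] [Module k C]
    [Coalgebra k C]
    -- a comodule `(V, ρ)` over `C`:
    (V : Type) [AddCommGroup V] [Module k V] (ρ : V →ₗ[k] V ⊗[k] C)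
    (hcoassoc : ∀ v : V, (TensorProduct.assoc k V C C) (LinearMap.rTensor C ρ (ρ v))
      = LinearMap.lTensor V (Coalgebra.comul (R := k)) (ρ v)) :
    -- the set of finite-dimensional subcomodules of `V`:
    let S : Set (Submodule k V) := {W | FiniteDimensional k W ∧
      ∀ w ∈ W, ρ w ∈ LinearMap.range (LinearMap.rTensor C W.subtype)}
    -- every element lies in a finite-dimensional subcomodule,
    (∀ v : V, ∃ W ∈ S, v ∈ W) ∧
    -- the finite-dimensional subcomodules are directed, and their union is everything
    DirectedOn (· ≤ ·) S ∧ sSup S = ⊤ := by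
  intro S
  have exists_mem (v : V) : ∃ W ∈ S, v ∈ W := by
    obtain ⟨W, hfg, hW, hv⟩ := exists_fg_isSubcomodule_mem ρ hcoassoc v
    exact ⟨W, ⟨Module.Finite.iff_fg.mpr hfg, hW⟩, hv⟩
  refine ⟨exists_mem, ?_, ?_⟩
  · rintro W₁ ⟨_, hW₁⟩ W₂ ⟨_, hW₂⟩
    exact ⟨W₁ ⊔ W₂, ⟨inferInstance, IsSubcomodule.sup hW₁ hW₂⟩, le_sup_left, le_sup_right⟩
  · refine eq_top_iff.mpr fun v _ => ?_
    obtain ⟨W, hWS, hvW⟩ := exists_mem v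
    exact Submodule.mem_sSup_of_mem hWS hvW

theorem stmt11 (k : Type) [Field k] (C : Type) [AddCommGroup C] [Module k C]
    [Coalgebra k C]
    -- a comodule `(V, ρ)` over `C`:
    (V : Type) [AddCommGroup V] [Module k V] (ρ : V →ₗ[k] V ⊗[k] C)
    (hcounit : ∀ v : V,
      (TensorProduct.rid k V) (LinearMap.lTensor V (Coalgebra.counit (R := k)) (ρ v)) = v)
    (hcoassoc : ∀ v : V, (TensorProduct.assoc k V C C) (LinearMap.rTensor C ρ (ρ v))
      = LinearMap.lTensor V (Coalgebra.comul (R := k)) (ρ v)) :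
    -- the set of finite-dimensional subcomodules of `V`:
    let S : Set (Submodule k V) := {W | FiniteDimensional k W ∧
      ∀ w ∈ W, ρ w ∈ LinearMap.range (LinearMap.rTensor C W.subtype)}
    -- every element lies in a finite-dimensional subcomodule,
    (∀ v : V, ∃ W ∈ S, v ∈ W) ∧
    -- the finite-dimensional subcomodules are directed, and their union is everything
    DirectedOn (· ≤ ·) S ∧ sSup S = ⊤ :=
  stmt11_general k C V ρ hcoassoc
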